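/- arXiv:2604.06894 — 2 statements merged into one kernel-verified Lean document; each statement's English description precedes it below -/
import Mathlib

section
/- Let G̃ and G be CDFs with sup_x |G̃(x) − G(x)| ≤ ε, and suppose G satisfies G(x+u) − G(x−u) ≤ 2Lu for all x and u ≥ 0. If F̃ is a nondecreasing function satisfying G̃(x − δ) ≤ F̃(x) ≤ G̃(x + δ) for all x, then sup_x |F̃(x) − G̃(x)| ≤ 2Lδ + 2ε. -/
/-! Both `F̃ x` and `G̃ x` lie in `[G̃ (x - δ), G̃ (x + δ)]`, so they differ by at most the increment of
`G̃` over that interval. Uniform `ε`-closeness makes this at most the increment of `G` plus `2ε`,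
and the Lipschitz-type bound caps the increment of `G` by `2Lδ`. -/

lemma sub_le_sub_add_two_mul_of_abs_sub_le {α : Type*} {f g : α → ℝ} {ε : ℝ}
    (h : ∀ x, |f x - g x| ≤ ε) (a b : α) : f b - f a ≤ g b - g a + 2 * ε := by
  linarith [(abs_le.1 (h a)).1, (abs_le.1 (h b)).2]

theorem stmt_4_general (Gtil G Ftil : ℝ → ℝ) (ε L δ : ℝ)
    (hδ : 0 ≤ δ)
    (hGtilmono : Monotone Gtil)
    (happrox : ∀ x, |Gtil x - G x| ≤ ε)
    (hLip : ∀ x u : ℝ, 0 ≤ u → G (x + u) - G (x - u) ≤ 2 * L * u)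
    (hsand : ∀ x, Gtil (x - δ) ≤ Ftil x ∧ Ftil x ≤ Gtil (x + δ)) :
    ∀ x, |Ftil x - Gtil x| ≤ 2 * L * δ + 2 * ε := by
  intro x
  have hF : Ftil x ∈ Set.Icc (Gtil (x - δ)) (Gtil (x + δ)) := hsand x
  have hG : Gtil x ∈ Set.Icc (Gtil (x - δ)) (Gtil (x + δ)) :=
    ⟨hGtilmono (by linarith), hGtilmono (by linarith)⟩
  calc |Ftil x - Gtil x| = dist (Ftil x) (Gtil x) := (Real.dist_eq _ _).symm
    _ ≤ Gtil (x + δ) - Gtil (x - δ) := Real.dist_le_of_mem_Icc hF hG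
    _ ≤ G (x + δ) - G (x - δ) + 2 * ε := sub_le_sub_add_two_mul_of_abs_sub_le happrox _ _
    _ ≤ 2 * L * δ + 2 * ε := by linarith [hLip x δ hδ]

/-- If `sup_x |G̃ x - G x| ≤ ε`, `G` satisfies the Lipschitz-type bound
`G (x+u) - G (x-u) ≤ 2Lu`, and the nondecreasing `F̃` satisfies
`G̃ (x-δ) ≤ F̃ x ≤ G̃ (x+δ)`, then `sup_x |F̃ x - G̃ x| ≤ 2Lδ + 2ε`. -/
theorem stmt_4 (Gtil G Ftil : ℝ → ℝ) (ε L δ : ℝ)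
    (hε : 0 ≤ ε) (hL : 0 ≤ L) (hδ : 0 ≤ δ)
    (hGtilmono : Monotone Gtil) (hGmono : Monotone G) (hFtilmono : Monotone Ftil)
    (hGtilrange : ∀ x, Gtil x ∈ Set.Icc (0:ℝ) 1)
    (hGrange : ∀ x, G x ∈ Set.Icc (0:ℝ) 1)
    (hFtilrange : ∀ x, Ftil x ∈ Set.Icc (0:ℝ) 1)
    (happrox : ∀ x, |Gtil x - G x| ≤ ε)
    (hLip : ∀ x u : ℝ, 0 ≤ u → G (x + u) - G (x - u) ≤ 2 * L * u)
    (hsand : ∀ x, Gtil (x - δ) ≤ Ftil x ∧ Ftil x ≤ Gtil (x + δ)) :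
    ∀ x, |Ftil x - Gtil x| ≤ 2 * L * δ + 2 * ε :=
  stmt_4_general Gtil G Ftil ε L δ hδ hGtilmono happrox hLip hsand
end

section
/- Suppose (i) the empirical oracle-score CDF G̃ satisfies sup_x |G̃(x) − G(x)| ≤ ε; (ii) the fitted scores s_{i,t} and oracle scores r_{i,t} satisfy |s_{i,t} − r_{i,t}| ≤ δ for all calibration and test points; and (iii) G satisfies G(x+u) − G(x−u) ≤ 2Lu for all x, u ≥ 0. Then the empirical CDF F̃ of the fitted calibration scores and the CDF F of the fitted test score satisfy sup_x |F̃(x) − F(x)| ≤ 3ε + 4Lδ. -/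
/-!
Shifting the threshold by `δ` turns a `δ`-perturbation of the scores into a comparison of CDFs:
`G̃ (x - δ) ≤ F̃ x ≤ G̃ (x + δ)` and `G (x - δ) ≤ F x ≤ G (x + δ)`. Replacing `G̃` by `G` costs `ε`
and the spread `G (x + δ) - G (x - δ)` is at most `2Lδ`, so in fact `|F̃ x - F x| ≤ ε + 2Lδ`.
-/

open MeasureTheory Finset

noncomputable def empiricalCDF {ι : Type*} [Fintype ι] (s : ι → ℝ) (x : ℝ) : ℝ :=
  #{j | s j ≤ x} / Fintype.card ι

lemma empiricalCDF_le_shift {ι : Type*} [Fintype ι] {s r : ι → ℝ} {δ : ℝ}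
    (h : ∀ j, r j ≤ s j + δ) (x : ℝ) : empiricalCDF s x ≤ empiricalCDF r (x + δ) := by
  unfold empiricalCDF
  refine div_le_div_of_nonneg_right (Nat.cast_le.mpr (card_le_card fun j => ?_))
    (Nat.cast_nonneg _)
  simp only [mem_filter, mem_univ, true_and]
  intro hj
  linarith [h j]

lemma measureReal_setOf_le_le_shift {Ω : Type*} [MeasurableSpace Ω] {μ : Measure Ω}
    [IsFiniteMeasure μ] {s r : Ω → ℝ} {δ : ℝ} (h : ∀ᵐ ω ∂μ, r ω ≤ s ω + δ) (x : ℝ) :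
    μ.real {ω | s ω ≤ x} ≤ μ.real {ω | r ω ≤ x + δ} := by
  have hae : {ω | s ω ≤ x} ≤ᵐ[μ] {ω | r ω ≤ x + δ} := by
    filter_upwards [h] with ω hω hs
    exact (hω.trans (add_le_add_left hs δ) : r ω ≤ x + δ)
  exact ENNReal.toReal_mono (measure_ne_top μ _) (measure_mono_ae hae)

lemma abs_sub_le_of_shift_sandwich {Ft F Gt G : ℝ → ℝ} {x δ ε η : ℝ}
    (hFt_lo : Gt (x - δ) ≤ Ft x) (hFt_hi : Ft x ≤ Gt (x + δ))
    (hF_lo : G (x - δ) ≤ F x) (hF_hi : F x ≤ G (x + δ))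
    (happrox : ∀ y, |Gt y - G y| ≤ ε) (hspread : G (x + δ) - G (x - δ) ≤ η) :
    |Ft x - F x| ≤ ε + η := by
  have happrox_hi := abs_le.mp (happrox (x + δ))
  have happrox_lo := abs_le.mp (happrox (x - δ))
  rw [abs_le]
  constructor <;> linarith [happrox_hi.1, happrox_hi.2, happrox_lo.1, happrox_lo.2]

theorem stmt_5_general {Ω : Type*} [MeasurableSpace Ω] (μ : Measure Ω) [IsProbabilityMeasure μ]
    (m : ℕ) (s r : Fin m → ℝ) (sStar rStar : Ω → ℝ)
    (ε L δ : ℝ) (hε : 0 ≤ ε) (hL : 0 ≤ L) (hδ : 0 ≤ δ)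
    (Ftil Gtil F G : ℝ → ℝ)
    (hFtil : ∀ x, Ftil x = ((Finset.univ.filter (fun j => s j ≤ x)).card : ℝ) / m)
    (hGtil : ∀ x, Gtil x = ((Finset.univ.filter (fun j => r j ≤ x)).card : ℝ) / m)
    (hF : ∀ x, F x = (μ {ω | sStar ω ≤ x}).toReal)
    (hG : ∀ x, G x = (μ {ω | rStar ω ≤ x}).toReal)
    (hclose_cal : ∀ j, |s j - r j| ≤ δ)
    (hclose_test : ∀ᵐ ω ∂μ, |sStar ω - rStar ω| ≤ δ)
    (happrox : ∀ x, |Gtil x - G x| ≤ ε)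
    (hLip : ∀ x u : ℝ, 0 ≤ u → G (x + u) - G (x - u) ≤ 2 * L * u) :
    ∀ x, |Ftil x - F x| ≤ 3 * ε + 4 * L * δ := by
  intro x
  have hFtil' : Ftil = empiricalCDF s := funext fun y => by simp [hFtil, empiricalCDF]
  have hGtil' : Gtil = empiricalCDF r := funext fun y => by simp [hGtil, empiricalCDF]
  have hF' : F = fun y => μ.real {ω | sStar ω ≤ y} := funext hF
  have hG' : G = fun y => μ.real {ω | rStar ω ≤ y} := funext hG
  have hr_le j : r j ≤ s j + δ := by linarith [(abs_le.mp (hclose_cal j)).1]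
  have hs_le j : s j ≤ r j + δ := by linarith [(abs_le.mp (hclose_cal j)).2]
  have hrStar_le : ∀ᵐ ω ∂μ, rStar ω ≤ sStar ω + δ := by
    filter_upwards [hclose_test] with ω hω using by linarith [(abs_le.mp hω).1]
  have hsStar_le : ∀ᵐ ω ∂μ, sStar ω ≤ rStar ω + δ := by
    filter_upwards [hclose_test] with ω hω using by linarith [(abs_le.mp hω).2]
  have hsandwich : |Ftil x - F x| ≤ ε + 2 * L * δ := by
    refine abs_sub_le_of_shift_sandwich ?_ ?_ ?_ ?_ happrox (hLip x δ hδ)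
    · simpa [hFtil', hGtil'] using empiricalCDF_le_shift hs_le (x - δ)
    · simpa [hFtil', hGtil'] using empiricalCDF_le_shift hr_le x
    · simpa [hF', hG'] using measureReal_setOf_le_le_shift hsStar_le (x - δ)
    · simpa [hF', hG'] using measureReal_setOf_le_le_shift hrStar_le x
  linarith [mul_nonneg hL hδ]

/-- Under (i) uniform closeness of the empirical oracle-score CDF `G̃` to the
oracle CDF `G`, (ii) pointwise `δ`-closeness of fitted and oracle scores on calibration and
test points, and (iii) a Lipschitz-type condition on `G`, the empirical CDF `F̃` of the
fitted calibration scores and the CDF `F` of the fitted test score satisfy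
`sup_x |F̃ x - F x| ≤ 3ε + 4Lδ`. -/
theorem stmt_5 {Ω : Type*} [MeasurableSpace Ω] (μ : Measure Ω) [IsProbabilityMeasure μ]
    (m : ℕ) (hm : 0 < m) (s r : Fin m → ℝ) (sStar rStar : Ω → ℝ)
    (ε L δ : ℝ) (hε : 0 ≤ ε) (hL : 0 ≤ L) (hδ : 0 ≤ δ)
    (Ftil Gtil F G : ℝ → ℝ)
    (hFtil : ∀ x, Ftil x = ((Finset.univ.filter (fun j => s j ≤ x)).card : ℝ) / m)
    (hGtil : ∀ x, Gtil x = ((Finset.univ.filter (fun j => r j ≤ x)).card : ℝ) / m)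
    (hF : ∀ x, F x = (μ {ω | sStar ω ≤ x}).toReal)
    (hG : ∀ x, G x = (μ {ω | rStar ω ≤ x}).toReal)
    (hmeas_s : Measurable sStar) (hmeas_r : Measurable rStar)
    (hclose_cal : ∀ j, |s j - r j| ≤ δ)
    (hclose_test : ∀ᵐ ω ∂μ, |sStar ω - rStar ω| ≤ δ)
    (happrox : ∀ x, |Gtil x - G x| ≤ ε)
    (hLip : ∀ x u : ℝ, 0 ≤ u → G (x + u) - G (x - u) ≤ 2 * L * u) :
    ∀ x, |Ftil x - F x| ≤ 3 * ε + 4 * L * δ :=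
  stmt_5_general μ m s r sStar rStar ε L δ hε hL hδ Ftil Gtil F G hFtil hGtil hF hG hclose_cal
    hclose_test happrox hLip
end
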